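/- For n ∈ ℕ and integers a, b ≥ 0 with a + 2b ≤ n − 1, define α^n_{a,b} = ((−1)^{n−1−a−b} / n) · 2^{n−1−a−2b} · binom(n−1−a−b, b). Then these numbers satisfy all of the following relations: (i) n · α^n_{n−1,0} = 1; (ii) for all a ∈ {0,…,n−4} and b ∈ {1,…,⌊(n−2−a)/2⌋}: α^n_{a,b} + 2α^n_{a+1,b} + α^n_{a+2,b−1} = 0; (iii) for all a ∈ {0,…,n−3} with n − a odd: α^n_{a,(n−1−a)/2} + α^n_{a+2,(n−3−a)/2} = 0; (iv) for all a ∈ {0,…,n−2}: α^n_{a,0} + 2α^n_{a+1,0} = 0. Moreover, α^n is the unique family indexed by pairs (a,b) with a,b ≥ 0 and a + 2b ≤ n − 1 satisfying (i)–(iv). -/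
import Mathlib


/-- The coefficients `α^n_{a,b} = ((−1)^{n−1−a−b}/n) · 2^{n−1−a−2b} · C(n−1−a−b, b)`,
intended for `a + 2b ≤ n − 1`. -/
noncomputable def alph (n a b : ℕ) : ℝ :=
  (-1 : ℝ) ^ (n - 1 - a - b) / n * 2 ^ (n - 1 - a - 2 * b) * ((n - 1 - a - b).choose b)

theorem stmt_18 (n : ℕ) (hn : 1 ≤ n) :
    ((n : ℝ) * alph n (n - 1) 0 = 1) ∧
    (∀ a b : ℕ, a + 4 ≤ n → 1 ≤ b → a + 2 + 2 * b ≤ n →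
      alph n a b + 2 * alph n (a + 1) b + alph n (a + 2) (b - 1) = 0) ∧
    (∀ a : ℕ, a + 3 ≤ n → Odd (n - a) →
      alph n a ((n - 1 - a) / 2) + alph n (a + 2) ((n - 3 - a) / 2) = 0) ∧
    (∀ a : ℕ, a + 2 ≤ n → alph n a 0 + 2 * alph n (a + 1) 0 = 0) ∧
    (∀ g : ℕ → ℕ → ℝ,
      ((n : ℝ) * g (n - 1) 0 = 1) →
      (∀ a b : ℕ, a + 4 ≤ n → 1 ≤ b → a + 2 + 2 * b ≤ n →
        g a b + 2 * g (a + 1) b + g (a + 2) (b - 1) = 0) →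
      (∀ a : ℕ, a + 3 ≤ n → Odd (n - a) →
        g a ((n - 1 - a) / 2) + g (a + 2) ((n - 3 - a) / 2) = 0) →
      (∀ a : ℕ, a + 2 ≤ n → g a 0 + 2 * g (a + 1) 0 = 0) →
      ∀ a b : ℕ, a + 2 * b + 1 ≤ n → g a b = alph n a b) := by
  have hn0 : (n : ℝ) ≠ 0 := Nat.cast_ne_zero.mpr (by omega)
  have h1 : (n : ℝ) * alph n (n - 1) 0 = 1 := by
    have e1 : n - 1 - (n - 1) - 0 = 0 := by omega
    have e2 : n - 1 - (n - 1) - 2 * 0 = 0 := by omega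
    simp [alph, e1, e2]
    field_simp
  have h2 : ∀ a b : ℕ, a + 4 ≤ n → 1 ≤ b → a + 2 + 2 * b ≤ n →
      alph n a b + 2 * alph n (a + 1) b + alph n (a + 2) (b - 1) = 0 := by
    intro a b h4 hb hle
    obtain ⟨b', rfl⟩ : ∃ b', b = b' + 1 := ⟨b - 1, by omega⟩
    obtain ⟨j, hj⟩ : ∃ j, n - 1 - (a + 1) - (b' + 1) = j := ⟨_, rfl⟩
    obtain ⟨m, hm⟩ : ∃ m, n - 1 - (a + 1) - 2 * (b' + 1) = m := ⟨_, rfl⟩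
    have e1 : n - 1 - a - (b' + 1) = j + 1 := by omega
    have e2 : n - 1 - a - 2 * (b' + 1) = m + 1 := by omega
    have e5 : b' + 1 - 1 = b' := by omega
    have e3 : n - 1 - (a + 2) - b' = j := by omega
    have e4 : n - 1 - (a + 2) - 2 * b' = m + 1 := by omega
    simp only [alph, e5, e1, e2, e3, e4, hj, hm, Nat.choose_succ_succ j b',
      Nat.succ_eq_add_one]
    push_cast
    ring
  have h3 : ∀ a : ℕ, a + 3 ≤ n → Odd (n - a) →
      alph n a ((n - 1 - a) / 2) + alph n (a + 2) ((n - 3 - a) / 2) = 0 := by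
    intro a h3n hodd
    obtain ⟨c, hc⟩ := hodd
    have hc1 : 1 ≤ c := by omega
    obtain ⟨c', rfl⟩ : ∃ c', c = c' + 1 := ⟨c - 1, by omega⟩
    have e1 : (n - 1 - a) / 2 = c' + 1 := by omega
    have e2 : (n - 3 - a) / 2 = c' := by omega
    have e3 : n - 1 - a - (c' + 1) = c' + 1 := by omega
    have e4 : n - 1 - a - 2 * (c' + 1) = 0 := by omega
    have e5 : n - 1 - (a + 2) - c' = c' := by omega
    have e6 : n - 1 - (a + 2) - 2 * c' = 0 := by omega
    simp only [alph, e1, e2, e3, e4, e5, e6, Nat.choose_self, pow_zero, pow_succ]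
    push_cast
    ring
  have h4 : ∀ a : ℕ, a + 2 ≤ n → alph n a 0 + 2 * alph n (a + 1) 0 = 0 := by
    intro a h2n
    obtain ⟨j, hj⟩ : ∃ j, n - 1 - (a + 1) = j := ⟨_, rfl⟩
    have e1 : n - 1 - a - 0 = j + 1 := by omega
    have e2 : n - 1 - a - 2 * 0 = j + 1 := by omega
    have e3 : n - 1 - (a + 1) - 0 = j := by omega
    have e4 : n - 1 - (a + 1) - 2 * 0 = j := by omega
    simp only [alph, e1, e2, e3, e4, Nat.choose_zero_right, pow_succ]
    push_cast
    ring
  refine ⟨h1, h2, h3, h4, ?_⟩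
  intro g hg1 hg2 hg3 hg4 a b hab
  have key : ∀ b d a : ℕ, a + 2 * b + 1 + d = n → g a b = alph n a b := by
    intro b
    induction b with
    | zero =>
      intro d
      induction d with
      | zero =>
        intro a ha
        have haeq : a = n - 1 := by omega
        subst haeq
        have := hg1.trans h1.symm
        exact mul_left_cancel₀ hn0 this
      | succ d ih =>
        intro a ha
        have hg4a := hg4 a (by omega)
        have h4a := h4 a (by omega)
        have ih' := ih (a + 1) (by omega)
        linear_combination hg4a - h4a - 2 * ih'
    | succ b ihb =>
      intro d
      induction d with
      | zero =>
        intro a ha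
        have hodd : Odd (n - a) := ⟨b + 1, by omega⟩
        have hg3a := hg3 a (by omega) hodd
        have h3a := h3 a (by omega) hodd
        have e1 : (n - 1 - a) / 2 = b + 1 := by omega
        have e2 : (n - 3 - a) / 2 = b := by omega
        rw [e1, e2] at hg3a h3a
        have ihb' := ihb 0 (a + 2) (by omega)
        linear_combination hg3a - h3a - ihb'
      | succ d ih =>
        intro a ha
        have hg2a := hg2 a (b + 1) (by omega) (by omega) (by omega)
        have h2a := h2 a (b + 1) (by omega) (by omega) (by omega)
        have e5 : b + 1 - 1 = b := by omega
        rw [e5] at hg2a h2a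
        have ih' := ih (a + 1) (by omega)
        have ihb' := ihb (d + 1) (a + 2) (by omega)
        linear_combination hg2a - h2a - 2 * ih' - ihb'
  exact key b (n - (a + 2 * b + 1)) a (by omega)
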